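/- Let X = ℓ²((0,1]) be the real Hilbert space of square-summable families indexed by (0,1], with standard unit vectors e_s for s ∈ (0,1]. Define h : [0,1] → X by h(t) = e_t for t ∈ (0,1] and h(0) = 0. Then h is McShane integrable on [0,1] with integral 0. -/

import Mathlib

/-!
With a constant gauge `δ`, a `δ`-fine tagged partition `{(Jᵢ, tᵢ)}` of `[0,1]` has Riemann sum
`S = ∑ᵢ |Jᵢ| e_{tᵢ}`. The vectors `e_t` are orthonormal, so grouping the boxes by tag,
`‖S‖² = ∑ₜ (∑_{tᵢ = t} |Jᵢ|)²`. The boxes with a common tag `t` are nonoverlapping and lie in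
`[t - δ, t + δ]`, so each inner sum is at most `2δ`, whence `‖S‖² ≤ 2δ · ∑ᵢ |Jᵢ| ≤ 2δ`.
-/

open scoped ENNReal

/-- `h : [0,1] → ℓ²((0,1])`, `h t = e_t` for `t ∈ (0,1]` and `h 0 = 0`, where `e_s` are the
standard unit vectors of `ℓ²((0,1])`. -/
noncomputable def hMcShane (t : ℝ) : lp (fun _ : Set.Ioc (0 : ℝ) 1 => ℝ) 2 :=
  if h : t ∈ Set.Ioc (0 : ℝ) 1 then lp.single 2 (⟨t, h⟩ : Set.Ioc (0 : ℝ) 1) 1 else 0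

/-- The unit interval `[0,1]` as a one-dimensional box. -/
noncomputable def unitBox : BoxIntegral.Box (Fin 1) :=
  ⟨fun _ => (0 : ℝ), fun _ => (1 : ℝ), fun _ => one_pos⟩

open BoxIntegral MeasureTheory Metric Finset
open scoped RealInnerProductSpace

theorem norm_sq_sum_smul_le_of_pairwise_inner_eq_zero {E α ι : Type*} [NormedAddCommGroup E]
    [InnerProductSpace ℝ E] [DecidableEq α] {v : α → E} (hv : Pairwise fun a b => ⟪v a, v b⟫ = 0)
    (hv₁ : ∀ a, ‖v a‖ ≤ 1) {s : Finset ι} {c : ι → ℝ} (hc : ∀ i ∈ s, 0 ≤ c i) (τ : ι → α)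
    {B : ℝ} (hB : ∀ i ∈ s, ∑ j ∈ s with τ j = τ i, c j ≤ B) :
    ‖∑ i ∈ s, c i • v (τ i)‖ ^ 2 ≤ B * ∑ i ∈ s, c i := by
  rw [← real_inner_self_eq_norm_sq, sum_inner, mul_sum]
  refine sum_le_sum fun i hi => ?_
  have hterm : ∀ j ∈ s,
      ⟪c i • v (τ i), c j • v (τ j)⟫ ≤ c i * if τ j = τ i then c j else 0 := by
    intro j hj
    rw [real_inner_smul_left, real_inner_smul_right]
    split_ifs with h
    · rw [h, real_inner_self_eq_norm_sq]
      exact mul_le_mul_of_nonneg_left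
        (mul_le_of_le_one_right (hc j hj) (pow_le_one₀ (norm_nonneg _) (hv₁ _))) (hc i hi)
    · simp only [hv (Ne.symm h), mul_zero, le_refl]
  calc ⟪c i • v (τ i), ∑ j ∈ s, c j • v (τ j)⟫
      ≤ ∑ j ∈ s, c i * if τ j = τ i then c j else 0 := by
        rw [inner_sum]; exact sum_le_sum hterm
    _ = c i * ∑ j ∈ s with τ j = τ i, c j := by rw [← mul_sum, sum_filter]
    _ ≤ B * c i := by rw [mul_comm]; exact mul_le_mul_of_nonneg_right (hB i hi) (hc i hi)

namespace BoxIntegral.TaggedPrepartition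

variable {ι : Type*} [Fintype ι] {I : Box ι} (π : TaggedPrepartition I)
  (μ : Measure (ι → ℝ)) [IsLocallyFiniteMeasure μ]

theorem sum_measureReal_le : ∑ J ∈ π.boxes, μ.real J ≤ μ.real I := by
  rw [← π.measure_iUnion_toReal μ]
  exact measureReal_mono π.iUnion_subset (I.measure_coe_lt_top μ).ne

theorem sum_measureReal_of_tag_eq_le {r : (ι → ℝ) → Set.Ioi (0 : ℝ)} (hπ : π.IsSubordinate r)
    (x : ι → ℝ) : ∑ J ∈ π.boxes with π.tag J = x, μ.real J ≤ μ.real (closedBall x (r x)) := by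
  have hdisj : (↑(π.boxes.filter (π.tag · = x)) : Set (Box ι)).PairwiseDisjoint
      (fun J => (J : Set (ι → ℝ))) :=
    Set.PairwiseDisjoint.subset π.pairwiseDisjoint fun J hJ => (Finset.mem_filter.1 hJ).1
  rw [← measureReal_biUnion_finset hdisj (fun J _ => J.measurableSet_coe)
    (fun J _ => (J.measure_coe_lt_top μ).ne)]
  refine measureReal_mono (Set.iUnion₂_subset fun J hJ => ?_) measure_closedBall_lt_top.ne
  obtain ⟨hJπ, rfl⟩ := Finset.mem_filter.1 hJ
  exact J.coe_subset_Icc.trans (hπ J hJπ)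

end BoxIntegral.TaggedPrepartition

theorem inner_hMcShane_of_ne {s t : ℝ} (hst : s ≠ t) : ⟪hMcShane s, hMcShane t⟫ = 0 := by
  classical
  unfold hMcShane
  split_ifs with hs ht
  · rw [lp.inner_single_left, lp.single_apply_ne 2 _ _ (by simpa using hst), inner_zero_right]
  all_goals simp

theorem norm_hMcShane_le_one (t : ℝ) : ‖hMcShane t‖ ≤ 1 := by
  unfold hMcShane
  split_ifs
  · rw [lp.norm_single (by norm_num), norm_one]
  · simp

/-- The function `h(t) = e_t` (with `h 0 = 0`) with values in `ℓ²((0,1])` is McShane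
integrable on `[0,1]` with integral `0`. -/
theorem hMcShane_mcShane_integrable :
    BoxIntegral.HasIntegral unitBox BoxIntegral.IntegrationParams.McShane
      (fun v => hMcShane (v 0)) MeasureTheory.volume.toBoxAdditive.toSMul
      (0 : lp (fun _ : Set.Ioc (0 : ℝ) 1 => ℝ) 2) := by
  refine hasIntegral_iff.2 fun ε hε => ?_
  have hδ : 0 < ε ^ 2 / 2 := by positivity
  refine ⟨fun _ _ => ⟨ε ^ 2 / 2, hδ⟩, fun _ _ _ => rfl, fun c π hπ _ => ?_⟩
  have horth : Pairwise fun x y : Fin 1 → ℝ => ⟪hMcShane (x 0), hMcShane (y 0)⟫ = 0 :=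
    fun x y hxy => inner_hMcShane_of_ne fun h => hxy (funext fun i => Fin.fin_one_eq_zero i ▸ h)
  have htag : ∀ J ∈ π.boxes,
      ∑ K ∈ π.boxes with π.tag K = π.tag J, volume.real (K : Set (Fin 1 → ℝ)) ≤ ε ^ 2 := by
    intro J _
    refine (π.sum_measureReal_of_tag_eq_le volume hπ.isSubordinate _).trans_eq ?_
    rw [measureReal_def, Real.volume_pi_closedBall _ hδ.le, ENNReal.toReal_ofReal (by positivity),
      Fintype.card_fin]
    ring
  have htotal : ∑ J ∈ π.boxes, volume.real (J : Set (Fin 1 → ℝ)) ≤ 1 := by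
    refine (π.sum_measureReal_le volume).trans_eq ?_
    simp [measureReal_def, unitBox]
  have hS := norm_sq_sum_smul_le_of_pairwise_inner_eq_zero horth
    (fun x => norm_hMcShane_le_one (x 0)) (fun J _ => measureReal_nonneg) π.tag htag
  rw [dist_zero_right]
  show ‖∑ J ∈ π.boxes, volume.real (J : Set (Fin 1 → ℝ)) • hMcShane (π.tag J 0)‖ ≤ ε
  rw [← pow_le_pow_iff_left₀ (norm_nonneg _) hε.le two_ne_zero]
  exact hS.trans (mul_le_of_le_one_right (sq_nonneg ε) htotal)
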